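/- Let A = ι →₀ ℕ be a transitive finite-rank ℕSet algebra with Frobenius–Perron character φ, and let a ∈ ι →₀ ℕ. Define the left-multiplication matrix L_a over ℝ by (L_a)_{k j} := (a * e_j)(k). Then φ(a) is an eigenvalue of L_a, and every complex eigenvalue z of L_a (viewing L_a as a complex matrix) satisfies |z| ≤ φ(a); in other words, φ(a) is the largest non-negative eigenvalue of the matrix of left multiplication by a. -/

import Mathlib

/-!
The vector `w = (φ(e_k))_k` is a strictly positive left eigenvector of `L_a` for `φ(a)`,
because `∑_k (a e_j)(k) φ(e_k) = φ(a e_j) = φ(a) φ(e_j)`. A left eigenvector yields a right one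
(`det (L_a - φ(a)) = 0`). For a complex eigenpair `(z, v)`, the triangle inequality gives
`|z| |v| ≤ L_a |v|` entrywise; pairing with `w` gives `|z| ⟨w, |v|⟩ ≤ φ(a) ⟨w, |v|⟩`,
and `⟨w, |v|⟩ > 0`.
-/

open Finsupp

/-- An ℕSet algebra: an associative multiplication on the free commutative monoid
`ι →₀ ℕ`, additive in each argument, with a two-sided unit. -/
structure NSetAlgebra (ι : Type*) where
  mul : (ι →₀ ℕ) → (ι →₀ ℕ) → (ι →₀ ℕ)
  one : ι →₀ ℕ
  mul_assoc : ∀ a b c, mul (mul a b) c = mul a (mul b c)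
  one_mul : ∀ a, mul one a = a
  mul_one : ∀ a, mul a one = a
  left_distrib : ∀ a b c, mul a (b + c) = mul a b + mul a c
  right_distrib : ∀ a b c, mul (a + b) c = mul a c + mul b c
  zero_mul : ∀ a, mul 0 a = 0
  mul_zero : ∀ a, mul a 0 = 0

namespace NSetAlgebra

open Matrix

variable {ι : Type*}

/-- The structure constants `N(i,j,k) = (e_i * e_j)(k)`. -/
noncomputable def N (A : NSetAlgebra ι) (i j k : ι) : ℕ :=
  A.mul (Finsupp.single i 1) (Finsupp.single j 1) k

/-- Transitivity: for all simple `i, j` there are `u, v` with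
`e_j ≤ e_u * e_i` and `e_j ≤ e_i * e_v`. -/
def Transitive (A : NSetAlgebra ι) : Prop :=
  ∀ i j : ι, (∃ u, Finsupp.single j 1 ≤ A.mul (Finsupp.single u 1) (Finsupp.single i 1)) ∧
             (∃ v, Finsupp.single j 1 ≤ A.mul (Finsupp.single i 1) (Finsupp.single v 1))

/-- A Frobenius–Perron character: additive, multiplicative, unital,
and strictly positive on simple elements. -/
structure IsFPCharacter (A : NSetAlgebra ι) (φ : (ι →₀ ℕ) → ℝ) : Prop where
  map_add : ∀ a b, φ (a + b) = φ a + φ b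
  map_mul : ∀ a b, φ (A.mul a b) = φ a * φ b
  map_one : φ A.one = 1
  pos : ∀ i, 0 < φ (Finsupp.single i 1)

/-- The ℝ-bilinear extension of the multiplication to vectors `ι → ℝ`:
`(r ⋆ s)(k) = ∑ i j, r i * s j * N i j k`. -/
noncomputable def starMul [Fintype ι] (A : NSetAlgebra ι) (r s : ι → ℝ) : ι → ℝ :=
  fun k => ∑ i : ι, ∑ j : ι, r i * s j * (A.N i j k : ℝ)

/-- A fusion semiring structure: an involution `σ` such that for all simples `i, j`,
`j = σ i` iff there is a unique simple `k` with `e_k ≤ 1 ∩ (e_i * e_j)`,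
iff there is a unique simple `k` with `e_k ≤ 1 ∩ (e_j * e_i)`. -/
structure IsFusionSemiring (A : NSetAlgebra ι) (σ : ι → ι) : Prop where
  involutive : ∀ i, σ (σ i) = i
  dual_iff : ∀ i j : ι,
    (∃! k, Finsupp.single k 1 ≤ A.one ∧
        Finsupp.single k 1 ≤ A.mul (Finsupp.single i 1) (Finsupp.single j 1)) ↔ j = σ i
  dual_iff' : ∀ i j : ι,
    (∃! k, Finsupp.single k 1 ≤ A.one ∧
        Finsupp.single k 1 ≤ A.mul (Finsupp.single j 1) (Finsupp.single i 1)) ↔ j = σ i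

/-- A regular element: a strictly positive vector `R` with `e_i ⋆ R = φ(e_i) • R`
for every simple `i`. -/
noncomputable def IsRegular [Fintype ι] (A : NSetAlgebra ι) (φ : (ι →₀ ℕ) → ℝ)
    (R : ι → ℝ) : Prop :=
  (∀ i, 0 < R i) ∧
  ∀ i : ι, A.starMul (fun k => ((Finsupp.single i 1 : ι →₀ ℕ) k : ℝ)) R
    = φ (Finsupp.single i 1) • R

end NSetAlgebra

/-- The real vector underlying an element of `ι →₀ ℕ`. -/
def toRealVec {ι : Type*} (a : ι →₀ ℕ) : ι → ℝ := fun k => (a k : ℝ)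

/-- The ℝ-linear extension of an additive map `(ι →₀ ℕ) → (κ →₀ ℕ)` to vectors. -/
noncomputable def linExt {ι κ : Type*} [Fintype ι]
    (f : (ι →₀ ℕ) → (κ →₀ ℕ)) (r : ι → ℝ) : κ → ℝ :=
  fun x => ∑ i : ι, r i * (f (Finsupp.single i 1) x : ℝ)

namespace Matrix

variable {n : Type*} [Fintype n]

theorem exists_mulVec_eq_smul_of_vecMul_eq_smul {K : Type*} [Field K] [DecidableEq n]
    {M : Matrix n n K} {w : n → K} {r : K} (hw : w ≠ 0) (h : w ᵥ* M = r • w) :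
    ∃ v ≠ 0, M *ᵥ v = r • v := by
  have hdet : (M - r • 1).det = 0 :=
    exists_vecMul_eq_zero_iff.mp ⟨w, hw, by rw [vecMul_sub, h, vecMul_smul, vecMul_one, sub_self]⟩
  obtain ⟨v, hv, hv0⟩ := exists_mulVec_eq_zero_iff.mpr hdet
  refine ⟨v, hv, ?_⟩
  rwa [sub_mulVec, smul_mulVec, one_mulVec, sub_eq_zero] at hv0

theorem norm_le_of_vecMul_eq_smul {M : Matrix n n ℝ} (hM : ∀ i j, 0 ≤ M i j) {w : n → ℝ}
    (hw : ∀ i, 0 < w i) {r : ℝ} (h : w ᵥ* M = r • w) {z : ℂ} {v : n → ℂ} (hv : v ≠ 0)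
    (hz : (M.map (↑)) *ᵥ v = z • v) : ‖z‖ ≤ r := by
  set u : n → ℝ := fun i => ‖v i‖
  have hu : 0 ≤ u := fun i => norm_nonneg _
  have hwu : 0 < w ⬝ᵥ u := by
    obtain ⟨i, hi⟩ := Function.ne_iff.mp hv
    exact Finset.sum_pos' (fun j _ => mul_nonneg (hw j).le (hu j))
      ⟨i, Finset.mem_univ _, mul_pos (hw i) (norm_pos_iff.mpr hi)⟩
  have htriangle : ‖z‖ • u ≤ M *ᵥ u := fun i => by
    calc ‖z‖ * ‖v i‖ = ‖∑ j, (M i j : ℂ) * v j‖ := by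
          rw [← norm_mul, ← smul_eq_mul, ← Pi.smul_apply, ← hz]; rfl
      _ ≤ ∑ j, ‖(M i j : ℂ) * v j‖ := norm_sum_le _ _
      _ = ∑ j, M i j * ‖v j‖ := by
          simp only [norm_mul, Complex.norm_real, Real.norm_of_nonneg (hM _ _)]
  have hpaired : ‖z‖ * (w ⬝ᵥ u) ≤ r * (w ⬝ᵥ u) :=
    calc ‖z‖ * (w ⬝ᵥ u) = w ⬝ᵥ (‖z‖ • u) := (dotProduct_smul (‖z‖) w u).symm
      _ ≤ w ⬝ᵥ (M *ᵥ u) := dotProduct_le_dotProduct_of_nonneg_left htriangle fun i => (hw i).le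
      _ = r * (w ⬝ᵥ u) := by rw [dotProduct_mulVec, h, smul_dotProduct, smul_eq_mul]
  exact le_of_mul_le_mul_right hpaired hwu

end Matrix

namespace NSetAlgebra

open Matrix

variable {ι : Type*} {A : NSetAlgebra ι} {φ : (ι →₀ ℕ) → ℝ}

noncomputable def leftMulMatrix (A : NSetAlgebra ι) (a : ι →₀ ℕ) : Matrix ι ι ℝ :=
  Matrix.of fun k j => (A.mul a (single j 1) k : ℝ)

lemma IsFPCharacter.apply_eq_sum [Fintype ι] (hφ : A.IsFPCharacter φ) (b : ι →₀ ℕ) :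
    φ b = ∑ k, (b k : ℝ) * φ (single k 1) := by
  let ψ : (ι →₀ ℕ) →+ ℝ := AddMonoidHom.mk' φ hφ.map_add
  calc φ b = ψ (∑ k, single k (b k)) := by rw [univ_sum_single]; rfl
    _ = ∑ k, (b k : ℝ) * φ (single k 1) := by
      refine map_sum ψ _ _ |>.trans (Finset.sum_congr rfl fun k _ => ?_)
      rw [← smul_single_one, map_nsmul, nsmul_eq_mul]; rfl

lemma IsFPCharacter.vecMul_leftMulMatrix [Fintype ι] (hφ : A.IsFPCharacter φ) (a : ι →₀ ℕ) :
    (fun k => φ (single k 1)) ᵥ* A.leftMulMatrix a = φ a • fun k => φ (single k 1) := by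
  ext j
  rw [Pi.smul_apply, smul_eq_mul, ← hφ.map_mul, hφ.apply_eq_sum]
  simp only [vecMul, dotProduct, leftMulMatrix, of_apply, mul_comm]

end NSetAlgebra

open NSetAlgebra in
theorem stmt10_general {ι : Type*} [Fintype ι] [Nonempty ι]
    (A : NSetAlgebra ι)
    (φ : (ι →₀ ℕ) → ℝ) (hφ : A.IsFPCharacter φ) (a : ι →₀ ℕ) :
    (∃ v : ι → ℝ, v ≠ 0 ∧
      (Matrix.of fun k j : ι => ((A.mul a (Finsupp.single j 1)) k : ℝ)).mulVec v
        = φ a • v) ∧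
    (∀ z : ℂ,
      (∃ v : ι → ℂ, v ≠ 0 ∧
        ((Matrix.of fun k j : ι => ((A.mul a (Finsupp.single j 1)) k : ℝ)).map
          (fun x : ℝ => (x : ℂ))).mulVec v = z • v) →
      ‖z‖ ≤ φ a) := by
  classical
  have hw : (fun k => φ (single k 1)) ≠ 0 := fun h =>
    (hφ.pos (Classical.arbitrary ι)).ne' (congrFun h _)
  refine ⟨Matrix.exists_mulVec_eq_smul_of_vecMul_eq_smul hw (hφ.vecMul_leftMulMatrix a),
    fun z ⟨v, hv, hz⟩ => Matrix.norm_le_of_vecMul_eq_smul (fun _ _ => Nat.cast_nonneg _)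
      hφ.pos (hφ.vecMul_leftMulMatrix a) hv hz⟩

open NSetAlgebra in
/-- `φ(a)` is an eigenvalue of the left-multiplication matrix `L_a`, and every complex
eigenvalue `z` of `L_a` satisfies `|z| ≤ φ(a)`: `φ(a)` is the largest non-negative
eigenvalue of left multiplication by `a`. -/
theorem stmt10 {ι : Type*} [Fintype ι] [Nonempty ι]
    (A : NSetAlgebra ι) (hA : A.Transitive)
    (φ : (ι →₀ ℕ) → ℝ) (hφ : A.IsFPCharacter φ) (a : ι →₀ ℕ) :
    (∃ v : ι → ℝ, v ≠ 0 ∧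
      (Matrix.of fun k j : ι => ((A.mul a (Finsupp.single j 1)) k : ℝ)).mulVec v
        = φ a • v) ∧
    (∀ z : ℂ,
      (∃ v : ι → ℂ, v ≠ 0 ∧
        ((Matrix.of fun k j : ι => ((A.mul a (Finsupp.single j 1)) k : ℝ)).map
          (fun x : ℝ => (x : ℂ))).mulVec v = z • v) →
      ‖z‖ ≤ φ a) :=
  stmt10_general A φ hφ a
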